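/- A three-dimensional subspace S of M₂(ℂ) is 1-hyperreflexive if and only if there exist unit vectors x, y ∈ ℂ² such that S = {T ∈ M₂(ℂ) : ⟨Tx, y⟩ = 0}. -/

import Mathlib

noncomputable def act {n : ℕ} (M : Matrix (Fin n) (Fin n) ℂ) :
    EuclideanSpace ℂ (Fin n) →L[ℂ] EuclideanSpace ℂ (Fin n) :=
  LinearMap.toContinuousLinearMap (Matrix.toEuclideanLin M)

noncomputable def mOpDist {n : ℕ} (T : Matrix (Fin n) (Fin n) ℂ)
    (S : Submodule ℂ (Matrix (Fin n) (Fin n) ℂ)) : ℝ :=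
  Metric.infDist (act T) ((fun A => act A) '' (S : Set (Matrix (Fin n) (Fin n) ℂ)))

noncomputable def mBeta {n : ℕ} (S : Submodule ℂ (Matrix (Fin n) (Fin n) ℂ))
    (T : Matrix (Fin n) (Fin n) ℂ) : ℝ :=
  ⨆ x : {x : EuclideanSpace ℂ (Fin n) // ‖x‖ = 1},
    Metric.infDist (act T x.1) ((fun A => act A x.1) '' (S : Set (Matrix (Fin n) (Fin n) ℂ)))

def MOneHyperreflexive {n : ℕ} (S : Submodule ℂ (Matrix (Fin n) (Fin n) ℂ)) : Prop :=
  ∀ T : Matrix (Fin n) (Fin n) ℂ, mOpDist T S = mBeta S T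

noncomputable def actL {n : ℕ} : Matrix (Fin n) (Fin n) ℂ →ₗ[ℂ] (EuclideanSpace ℂ (Fin n) →L[ℂ] EuclideanSpace ℂ (Fin n)) :=
  (LinearMap.toContinuousLinearMap.toLinearMap).comp (Matrix.toEuclideanLin.toLinearMap)

lemma act_eq_actL {n : ℕ} (M : Matrix (Fin n) (Fin n) ℂ) : act M = actL M := rfl

lemma actL_inj {n : ℕ} : Function.Injective (actL (n := n)) := fun a b h =>
  Matrix.toEuclideanLin.injective (LinearMap.toContinuousLinearMap.injective h)

lemma le_infDist' {α : Type*} [MetricSpace α] {s : Set α} {x : α} {b : ℝ}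
    (hs : s.Nonempty) (h : ∀ y ∈ s, b ≤ dist x y) : b ≤ Metric.infDist x s := by
  have : Nonempty s := hs.to_subtype
  rw [Metric.infDist_eq_iInf]
  exact le_ciInf fun y => h y y.2

lemma act_sub {n : ℕ} (A B : Matrix (Fin n) (Fin n) ℂ) : act (A - B) = act A - act B := by
  simp [act_eq_actL, map_sub]

lemma act_apply {n : ℕ} (M : Matrix (Fin n) (Fin n) ℂ) (z : EuclideanSpace ℂ (Fin n)) (i : Fin n) :
    act M z i = ∑ j, M i j * z j := by
  simp [act, Matrix.toEuclideanLin_apply, Matrix.mulVec, dotProduct]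

-- unit sphere nonempty for n = 2
lemma sphere_nonempty : Nonempty {x : EuclideanSpace ℂ (Fin 2) // ‖x‖ = 1} :=
  ⟨⟨EuclideanSpace.single 0 1, by simp⟩⟩

lemma mBeta_bdd {n : ℕ} (S : Submodule ℂ (Matrix (Fin n) (Fin n) ℂ)) (T : Matrix (Fin n) (Fin n) ℂ) :
    BddAbove (Set.range fun x : {x : EuclideanSpace ℂ (Fin n) // ‖x‖ = 1} =>
      Metric.infDist (act T x.1) ((fun A => act A x.1) '' (S : Set (Matrix (Fin n) (Fin n) ℂ)))) := by
  refine ⟨‖act T‖, ?_⟩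
  rintro r ⟨x, rfl⟩
  calc Metric.infDist (act T x.1) ((fun A => act A x.1) '' (S : Set _))
      ≤ dist (act T x.1) (act (0:Matrix (Fin n) (Fin n) ℂ) x.1) :=
        Metric.infDist_le_dist_of_mem ⟨0, S.zero_mem, rfl⟩
    _ ≤ ‖act T‖ := by
        have h0 : act (0:Matrix (Fin n) (Fin n) ℂ) = 0 := by
          simp [act_eq_actL, map_zero]
        rw [h0]
        simp only [ContinuousLinearMap.zero_apply, dist_zero_right]
        calc ‖act T x.1‖ ≤ ‖act T‖ * ‖x.1‖ := (act T).le_opNorm x.1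
          _ = ‖act T‖ := by rw [x.2, mul_one]

lemma mBeta_le_mOpDist {n : ℕ} [Nonempty {x : EuclideanSpace ℂ (Fin n) // ‖x‖ = 1}]
    (S : Submodule ℂ (Matrix (Fin n) (Fin n) ℂ)) (T : Matrix (Fin n) (Fin n) ℂ) :
    mBeta S T ≤ mOpDist T S := by
  refine ciSup_le fun x => ?_
  rw [mOpDist]
  refine le_infDist' ⟨act 0, ⟨0, S.zero_mem, rfl⟩⟩ ?_
  rintro _ ⟨A, hA, rfl⟩
  calc Metric.infDist (act T x.1) ((fun A => act A x.1) '' (S : Set _))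
      ≤ dist (act T x.1) (act A x.1) := Metric.infDist_le_dist_of_mem ⟨A, hA, rfl⟩
    _ = ‖act (T - A) x.1‖ := by rw [dist_eq_norm, ← ContinuousLinearMap.sub_apply, ← act_sub]
    _ ≤ ‖act (T - A)‖ * ‖x.1‖ := (act _).le_opNorm x.1
    _ = ‖act (T - A)‖ := by rw [x.2, mul_one]
    _ = dist (act T) (act A) := by rw [act_sub, ← dist_eq_norm]

lemma hyper_of_form {n : ℕ} (S : Submodule ℂ (Matrix (Fin n) (Fin n) ℂ))
    (x y : EuclideanSpace ℂ (Fin n)) (hx : ‖x‖ = 1) (hy : ‖y‖ = 1)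
    (hS : (S : Set (Matrix (Fin n) (Fin n) ℂ)) = {T | (inner ℂ (act T x) y : ℂ) = 0}) :
    MOneHyperreflexive S := by
  haveI : Nonempty {z : EuclideanSpace ℂ (Fin n) // ‖z‖ = 1} := ⟨⟨x, hx⟩⟩
  have hmem : ∀ A, A ∈ S ↔ (inner ℂ (act A x) y : ℂ) = 0 := fun A => by
    rw [← SetLike.mem_coe, hS]; rfl
  intro T
  set c : ℂ := (inner ℂ (act T x) y : ℂ) with hc
  -- the rank-one correction matrix
  set R : Matrix (Fin n) (Fin n) ℂ :=
    Matrix.of (fun i j => starRingEnd ℂ c * y i * starRingEnd ℂ (x j)) with hR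
  have hinner : ∀ u v : EuclideanSpace ℂ (Fin n),
      (inner ℂ u v : ℂ) = ∑ i, starRingEnd ℂ (u i) * v i := by
    intro u v; rw [PiLp.inner_apply]; exact Finset.sum_congr rfl fun i _ => by rw [RCLike.inner_apply]; ring
  have hRz : ∀ z : EuclideanSpace ℂ (Fin n),
      act R z = (starRingEnd ℂ c * (inner ℂ x z : ℂ)) • y := by
    intro z
    ext i
    rw [act_apply]
    have : ((starRingEnd ℂ c * (inner ℂ x z : ℂ)) • y) i
        = starRingEnd ℂ c * (inner ℂ x z : ℂ) * y i := rfl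
    rw [this, hinner, Finset.mul_sum, Finset.sum_mul]
    apply Finset.sum_congr rfl; intro j _
    show starRingEnd ℂ c * y i * starRingEnd ℂ (x j) * z j = _
    ring
  have hnormR : ‖act R‖ ≤ ‖c‖ := by
    refine ContinuousLinearMap.opNorm_le_bound _ (norm_nonneg c) fun z => ?_
    rw [hRz z, norm_smul]
    calc ‖starRingEnd ℂ c * (inner ℂ x z : ℂ)‖ * ‖y‖
        = ‖c‖ * ‖(inner ℂ x z : ℂ)‖ := by rw [hy, mul_one, norm_mul, RCLike.norm_conj]
      _ ≤ ‖c‖ * (‖x‖ * ‖z‖) := by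
          gcongr; exact norm_inner_le_norm x z
      _ = ‖c‖ * ‖z‖ := by rw [hx, one_mul]
  have hRx : (inner ℂ (act R x) y : ℂ) = c := by
    rw [hRz x]
    rw [inner_smul_left]
    have h1 : (inner ℂ x x : ℂ) = 1 := by
      rw [inner_self_eq_norm_sq_to_K, hx]; norm_num
    have h2 : (inner ℂ y y : ℂ) = 1 := by
      rw [inner_self_eq_norm_sq_to_K, hy]; norm_num
    rw [h2, mul_one, map_mul, h1, map_one, mul_one, Complex.conj_conj]
  have hTR : T - R ∈ S := by
    rw [hmem, act_sub, ContinuousLinearMap.sub_apply, inner_sub_left, ← hc, hRx, sub_self]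
  -- mOpDist ≤ ‖c‖
  have h1 : mOpDist T S ≤ ‖c‖ := by
    calc mOpDist T S ≤ dist (act T) (act (T - R)) :=
          Metric.infDist_le_dist_of_mem ⟨T - R, hTR, rfl⟩
      _ = ‖act R‖ := by rw [dist_eq_norm, act_sub, sub_sub_cancel]
      _ ≤ ‖c‖ := hnormR
  -- ‖c‖ ≤ mBeta
  have h2 : ‖c‖ ≤ mBeta S T := by
    refine le_ciSup_of_le (mBeta_bdd S T) ⟨x, hx⟩ ?_
    refine le_infDist' ⟨act 0 x, ⟨0, S.zero_mem, rfl⟩⟩ ?_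
    rintro _ ⟨A, hA, rfl⟩
    have hAx : (inner ℂ (act A x) y : ℂ) = 0 := (hmem A).1 hA
    calc ‖c‖ = ‖(inner ℂ (act T x - act A x) y : ℂ)‖ := by
          rw [inner_sub_left, hAx, sub_zero]
      _ ≤ ‖act T x - act A x‖ * ‖y‖ := norm_inner_le_norm _ _
      _ = dist (act T x) (act A x) := by rw [hy, mul_one, dist_eq_norm]
  exact le_antisymm (h1.trans h2) (mBeta_le_mOpDist S T)

-- expansion of a functional on matrices through the standard basis
lemma funct_eq_sum {n : ℕ} (f : Matrix (Fin n) (Fin n) ℂ →ₗ[ℂ] ℂ) (T : Matrix (Fin n) (Fin n) ℂ) :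
    f T = ∑ i, ∑ j, T i j * f (Matrix.single i j 1) := by
  conv_lhs => rw [Matrix.matrix_eq_sum_single T]
  rw [map_sum]
  apply Finset.sum_congr rfl; intro i _
  rw [map_sum]
  apply Finset.sum_congr rfl; intro j _
  have : Matrix.single i j (T i j) = T i j • Matrix.single i j 1 := by
    rw [Matrix.smul_single, smul_eq_mul, mul_one]
  rw [this, map_smul, smul_eq_mul]

-- rank one decomposition of a singular nonzero 2x2 matrix
lemma rank_one_decomp (A : Matrix (Fin 2) (Fin 2) ℂ) (hA : A ≠ 0) (hdet : A.det = 0) :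
    ∃ u v : Fin 2 → ℂ, u ≠ 0 ∧ v ≠ 0 ∧ ∀ i j, A i j = u i * v j := by
  rw [Matrix.det_fin_two] at hdet
  by_cases h00 : A 0 0 ≠ 0
  · refine ⟨![A 0 0, A 1 0], ![1, A 0 1 / A 0 0], ?_, ?_, ?_⟩
    · intro h; have := congrFun h 0; simp at this; exact h00 this
    · intro h; have := congrFun h 0; simp at this
    · intro i j
      fin_cases i <;> fin_cases j <;> simp <;> field_simp <;> linear_combination hdet
  · push_neg at h00
    by_cases h01 : A 0 1 ≠ 0
    · have h10 : A 1 0 = 0 := by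
        have : A 0 1 * A 1 0 = 0 := by linear_combination -hdet + A 1 1 * h00
        rcases mul_eq_zero.1 this with h | h
        · exact absurd h h01
        · exact h
      refine ⟨![A 0 1, A 1 1], ![0, 1], ?_, ?_, ?_⟩
      · intro h; have := congrFun h 0; simp at this; exact h01 this
      · intro h; have := congrFun h 1; simp at this
      · intro i j
        fin_cases i <;> fin_cases j <;> simp [h00, h10]
    · push_neg at h01
      have hrow : A 1 0 ≠ 0 ∨ A 1 1 ≠ 0 := by
        by_contra h
        push_neg at h
        apply hA
        ext i j
        fin_cases i <;> fin_cases j <;> simp [h00, h01, h.1, h.2]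
      refine ⟨![0, 1], ![A 1 0, A 1 1], ?_, ?_, ?_⟩
      · intro h; have := congrFun h 1; simp at this
      · intro h
        rcases hrow with h' | h'
        · exact h' (by have := congrFun h 0; simpa using this)
        · exact h' (by have := congrFun h 1; simpa using this)
      · intro i j
        fin_cases i <;> fin_cases j <;> simp [h00, h01]

lemma not_hyper (S : Submodule ℂ (Matrix (Fin 2) (Fin 2) ℂ))
    (f : Matrix (Fin 2) (Fin 2) ℂ →ₗ[ℂ] ℂ) (hker : LinearMap.ker f = S)
    (hdet : (Matrix.of fun i j => f (Matrix.single i j 1)).det ≠ 0) :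
    ¬ MOneHyperreflexive S := by
  set A₀ : Matrix (Fin 2) (Fin 2) ℂ := Matrix.of fun i j => f (Matrix.single i j 1) with hA₀
  -- a matrix with nonzero functional value
  have hA0ne : A₀ ≠ 0 := by
    intro h; rw [h] at hdet; simp at hdet
  obtain ⟨i₀, j₀, hij⟩ : ∃ i j, A₀ i j ≠ 0 := by
    by_contra h; push_neg at h
    exact hA0ne (by ext i j; simpa using h i j)
  set T₀ : Matrix (Fin 2) (Fin 2) ℂ := Matrix.single i₀ j₀ 1 with hT₀
  have hfT₀ : f T₀ ≠ 0 := hij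
  -- key pointwise approximation
  have key : ∀ x' : EuclideanSpace ℂ (Fin 2), ‖x'‖ = 1 →
      ∃ A ∈ S, act A x' = act T₀ x' := by
    intro x' hx'
    have hx'ne : x' ≠ 0 := fun h => by rw [h] at hx'; simp at hx'
    set w : Fin 2 → ℂ := ![x' 1, -(x' 0)] with hwdef
    have hwne : w ≠ 0 := by
      intro h
      apply hx'ne
      have h0 := congrFun h 0
      have h1 := congrFun h 1
      simp [hwdef] at h0 h1
      ext i
      fin_cases i
      · exact h1
      · exact h0
    set m : Fin 2 → ℂ := fun i => A₀ i 0 * w 0 + A₀ i 1 * w 1 with hmdef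
    have hdet2 : A₀.det = A₀ 0 0 * A₀ 1 1 - A₀ 0 1 * A₀ 1 0 := Matrix.det_fin_two A₀
    have hmne : ∃ k, m k ≠ 0 := by
      by_contra h; push_neg at h
      have h0 := h 0
      have h1 := h 1
      simp only [hmdef] at h0 h1
      apply hwne
      have hw0 : A₀.det * w 0 = 0 := by
        rw [hdet2]; linear_combination A₀ 1 1 * h0 - A₀ 0 1 * h1
      have hw1 : A₀.det * w 1 = 0 := by
        rw [hdet2]; linear_combination (-(A₀ 1 0)) * h0 + A₀ 0 0 * h1
      ext i
      fin_cases i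
      · exact (mul_eq_zero.1 hw0).resolve_left hdet
      · exact (mul_eq_zero.1 hw1).resolve_left hdet
    obtain ⟨k, hk⟩ := hmne
    set t : Fin 2 → ℂ := Pi.single k (f T₀ / m k) with htdef
    set B : Matrix (Fin 2) (Fin 2) ℂ := Matrix.of fun i j => t i * w j with hBdef
    have hBx : ∀ i, ∑ j, B i j * x' j = 0 := by
      intro i
      rw [Fin.sum_univ_two]
      show t i * w 0 * x' 0 + t i * w 1 * x' 1 = 0
      have hw0 : w 0 = x' 1 := rfl
      have hw1 : w 1 = -(x' 0) := rfl
      rw [hw0, hw1]; ring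
    have hfB : f B = f T₀ := by
      rw [funct_eq_sum f B]
      have : ∀ i : Fin 2, ∑ j, B i j * f (Matrix.single i j 1) = t i * m i := by
        intro i
        rw [Fin.sum_univ_two, hmdef]
        show t i * w 0 * A₀ i 0 + t i * w 1 * A₀ i 1 = _
        ring
      calc ∑ i, ∑ j, B i j * f (Matrix.single i j 1) = ∑ i, t i * m i :=
            Finset.sum_congr rfl fun i _ => this i
        _ = t k * m k := Finset.sum_eq_single k
            (fun i _ hik => by rw [htdef, Pi.single_eq_of_ne hik, zero_mul])
            (fun h => absurd (Finset.mem_univ k) h)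
        _ = f T₀ := by rw [htdef, Pi.single_eq_same, div_mul_cancel₀ _ hk]
    refine ⟨T₀ - B, ?_, ?_⟩
    · rw [← hker, LinearMap.mem_ker, map_sub, hfB, sub_self]
    · ext i
      rw [act_apply, act_apply]
      have : ∀ j, (T₀ - B) i j = T₀ i j - B i j := fun j => rfl
      calc ∑ j, (T₀ - B) i j * x' j = ∑ j, (T₀ i j * x' j - B i j * x' j) := by
            apply Finset.sum_congr rfl; intro j _; rw [this]; ring
        _ = ∑ j, T₀ i j * x' j - ∑ j, B i j * x' j := Finset.sum_sub_distrib _ _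
        _ = ∑ j, T₀ i j * x' j := by rw [hBx i, sub_zero]
  -- mBeta is zero
  haveI : Nonempty {x : EuclideanSpace ℂ (Fin 2) // ‖x‖ = 1} := sphere_nonempty
  have hBeta : mBeta S T₀ = 0 := by
    refine le_antisymm (ciSup_le fun x' => ?_) (Real.iSup_nonneg fun _ => Metric.infDist_nonneg)
    obtain ⟨A, hA, hAx⟩ := key x'.1 x'.2
    exact le_of_eq (Metric.infDist_zero_of_mem ⟨A, hA, hAx⟩)
  -- mOpDist is positive
  have himg : (fun A => act A) '' (S : Set (Matrix (Fin 2) (Fin 2) ℂ)) = ↑(S.map actL) := by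
    rw [Submodule.map_coe]; rfl
  have hclosed : IsClosed ((S.map actL : Submodule ℂ _) : Set (EuclideanSpace ℂ (Fin 2) →L[ℂ] EuclideanSpace ℂ (Fin 2))) :=
    Submodule.closed_of_finiteDimensional _
  have hnotmem : act T₀ ∉ ((S.map actL : Submodule ℂ _) : Set (EuclideanSpace ℂ (Fin 2) →L[ℂ] EuclideanSpace ℂ (Fin 2))) := by
    rintro ⟨A, hA, hAeq⟩
    have hAT : A = T₀ := actL_inj (hAeq.trans (act_eq_actL T₀))
    rw [← hker] at hA
    rw [← hAT] at hfT₀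
    exact hfT₀ hA
  have hpos : 0 < mOpDist T₀ S := by
    rw [mOpDist, himg]
    exact (IsClosed.notMem_iff_infDist_pos hclosed ⟨0, Submodule.zero_mem _⟩).1 hnotmem
  intro hhyp
  have := hhyp T₀
  rw [hBeta] at this
  linarith

/-- A three-dimensional subspace of `M₂(ℂ)` is `1`-hyperreflexive iff it is
`{T : ⟨Tx, y⟩ = 0}` for some unit vectors `x`, `y`. -/
theorem dim3_oneHyperreflexive_iff (S : Submodule ℂ (Matrix (Fin 2) (Fin 2) ℂ))
    (hdim : Module.finrank ℂ S = 3) :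
    MOneHyperreflexive S ↔
      ∃ x y : EuclideanSpace ℂ (Fin 2), ‖x‖ = 1 ∧ ‖y‖ = 1 ∧
        (S : Set (Matrix (Fin 2) (Fin 2) ℂ)) =
          {T | (inner ℂ (act T x) y : ℂ) = 0} := by
  constructor
  · intro hhyp
    -- obtain a functional with kernel S
    have h4 : Module.finrank ℂ (Matrix (Fin 2) (Fin 2) ℂ) = 4 := by
      simp [Module.finrank_matrix]
    have hq : Module.finrank ℂ (Matrix (Fin 2) (Fin 2) ℂ ⧸ S) = 1 := by
      have := Submodule.finrank_quotient_add_finrank S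
      rw [hdim, h4] at this
      omega
    obtain ⟨e⟩ := FiniteDimensional.nonempty_linearEquiv_of_finrank_eq
      (R := ℂ) (M := Matrix (Fin 2) (Fin 2) ℂ ⧸ S) (M' := ℂ)
      (by rw [hq, Module.finrank_self])
    set f : Matrix (Fin 2) (Fin 2) ℂ →ₗ[ℂ] ℂ := e.toLinearMap ∘ₗ S.mkQ with hf
    have hker : LinearMap.ker f = S := by
      rw [hf, LinearMap.ker_comp, LinearEquiv.ker, Submodule.comap_bot, Submodule.ker_mkQ]
    set A₀ : Matrix (Fin 2) (Fin 2) ℂ :=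
      Matrix.of (fun i j => f (Matrix.single i j 1)) with hA₀
    by_cases hdet : A₀.det = 0
    · -- rank one case : build the unit vectors
      have hA0ne : A₀ ≠ 0 := by
        intro h0
        have hf0 : ∀ T, f T = 0 := by
          intro T
          rw [funct_eq_sum f T]
          apply Finset.sum_eq_zero; intro i _
          apply Finset.sum_eq_zero; intro j _
          have : f (Matrix.single i j 1) = A₀ i j := rfl
          rw [this, h0]
          simp
        have : S = ⊤ := by
          rw [← hker]
          ext T; simp [LinearMap.mem_ker, hf0]
        rw [this, finrank_top, h4] at hdim
        norm_num at hdim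
      obtain ⟨u, v, hu, hv, huv⟩ := rank_one_decomp A₀ hA0ne hdet
      -- Euclidean versions
      set vE : EuclideanSpace ℂ (Fin 2) := (WithLp.equiv 2 (Fin 2 → ℂ)).symm v with hvE
      set uE : EuclideanSpace ℂ (Fin 2) :=
        (WithLp.equiv 2 (Fin 2 → ℂ)).symm (fun i => starRingEnd ℂ (u i)) with huE
      have hvE0 : vE ≠ 0 := by
        intro h; apply hv; funext i
        exact congrFun (congrArg (WithLp.equiv 2 (Fin 2 → ℂ)) h) i
      have huE0 : uE ≠ 0 := by
        intro h; apply hu; funext i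
        have h1 : starRingEnd ℂ (u i) = 0 :=
          congrFun (congrArg (WithLp.equiv 2 (Fin 2 → ℂ)) h) i
        simpa using congrArg (starRingEnd ℂ) h1
      set r : ℝ := ‖vE‖⁻¹ with hr
      set s : ℝ := ‖uE‖⁻¹ with hs
      have hrne : (r : ℝ) ≠ 0 := inv_ne_zero (norm_ne_zero_iff.2 hvE0)
      have hsne : (s : ℝ) ≠ 0 := inv_ne_zero (norm_ne_zero_iff.2 huE0)
      refine ⟨r • vE, s • uE, ?_, ?_, ?_⟩
      · rw [norm_smul, hr, Real.norm_eq_abs, abs_of_nonneg (inv_nonneg.2 (norm_nonneg _)),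
          inv_mul_cancel₀ (norm_ne_zero_iff.2 hvE0)]
      · rw [norm_smul, hs, Real.norm_eq_abs, abs_of_nonneg (inv_nonneg.2 (norm_nonneg _)),
          inv_mul_cancel₀ (norm_ne_zero_iff.2 huE0)]
      · ext T
        simp only [SetLike.mem_coe, Set.mem_setOf_eq]
        rw [← hker, LinearMap.mem_ker]
        -- coordinates
        have hxco : ∀ j, (r • vE) j = (r : ℂ) * v j := by
          intro j
          have : (r • vE) j = r • vE j := rfl
          rw [this]
          have : vE j = v j := rfl
          rw [this, Complex.real_smul]
        have hyco : ∀ i, (s • uE) i = (s : ℂ) * starRingEnd ℂ (u i) := by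
          intro i
          have : (s • uE) i = s • uE i := rfl
          rw [this]
          have : uE i = starRingEnd ℂ (u i) := rfl
          rw [this, Complex.real_smul]
        have hfT : f T = ∑ i, ∑ j, T i j * (u i * v j) := by
          rw [funct_eq_sum f T]
          apply Finset.sum_congr rfl; intro i _
          apply Finset.sum_congr rfl; intro j _
          have : f (Matrix.single i j 1) = A₀ i j := rfl
          rw [this, huv]
        have hval : (inner ℂ (act T (r • vE)) (s • uE) : ℂ)
            = (r : ℂ) * (s : ℂ) * starRingEnd ℂ (f T) := by
          rw [PiLp.inner_apply]
          have : ∀ i : Fin 2, (inner ℂ (act T (r • vE) i) ((s • uE) i) : ℂ)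
              = starRingEnd ℂ (act T (r • vE) i) * (s • uE) i := fun i => by rw [RCLike.inner_apply]; ring
          simp only [this]
          rw [hfT, map_sum, Finset.mul_sum]
          apply Finset.sum_congr rfl; intro i _
          simp only [act_apply, hyco, hxco, map_sum, map_mul, Complex.conj_ofReal,
            Finset.sum_mul, Finset.mul_sum]
          apply Finset.sum_congr rfl; intro j _
          ring
        constructor
        · intro hfT0
          rw [hval, hfT0, map_zero, mul_zero]
        · intro h0
          rw [hval] at h0
          have := mul_eq_zero.1 h0
          rcases this with h | h
          · exact absurd h (by
              simp only [mul_eq_zero, Complex.ofReal_eq_zero]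
              push_neg
              exact ⟨hrne, hsne⟩)
          · have : starRingEnd ℂ (starRingEnd ℂ (f T)) = 0 := by rw [h, map_zero]
            rwa [Complex.conj_conj] at this
    · exact absurd hhyp (not_hyper S f hker hdet)
  · rintro ⟨x, y, hx, hy, hS⟩
    exact hyper_of_form S x y hx hy hS
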